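/- arXiv:1210.7715 — 5 statements merged into one kernel-verified Lean document; each statement's English description precedes it below -/
import Mathlib

section
/- Let A be an integral domain and let P, Q ∈ A[x] be polynomials. Suppose S, T, U, V ∈ A[X,Y] are homogeneous polynomials and t is a positive integer such that S·P̃ + T·Q̃ = X^t and U·P̃ + V·Q̃ = Y^t as identities of homogeneous polynomials, where P̃(X,Y), Q̃(X,Y) are the homogenizations of P, Q. Define sequences A_n, B_n ∈ A by A_0 = a, B_0 = b with the ideal (a,b) = A, and A_{n+1} = P̃(A_n, B_n), B_{n+1} = Q̃(A_n, B_n). Then for all n ≥ 0, the ideal generated by A_n and B_n equals A. -/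
/-- Bezout identity for the homogenizations implies that each pair
`(A_n, B_n)` in the recursion generates the unit ideal, provided `(a, b)` does. -/
theorem stmt0 {A : Type*} [CommRing A] [IsDomain A]
    (Pt Qt S T U V : A → A → A) (t : ℕ) (ht : 0 < t)
    (hS : ∀ x y : A, S x y * Pt x y + T x y * Qt x y = x ^ t)
    (hU : ∀ x y : A, U x y * Pt x y + V x y * Qt x y = y ^ t)
    (a b : A) (hab : Ideal.span ({a, b} : Set A) = ⊤)
    (An Bn : ℕ → A) (hA0 : An 0 = a) (hB0 : Bn 0 = b)
    (hAn : ∀ n, An (n + 1) = Pt (An n) (Bn n))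
    (hBn : ∀ n, Bn (n + 1) = Qt (An n) (Bn n)) :
    ∀ n, Ideal.span ({An n, Bn n} : Set A) = ⊤ := by
  intro n
  induction n with
  | zero => simpa [hA0, hB0] using hab
  | succ n ih =>
    set I := Ideal.span ({An (n+1), Bn (n+1)} : Set A) with hI
    have hAmem : An (n+1) ∈ I := Ideal.subset_span (by simp)
    have hBmem : Bn (n+1) ∈ I := Ideal.subset_span (by simp)
    have hx : (An n) ^ t ∈ I := by
      rw [← hS (An n) (Bn n)]
      exact I.add_mem (I.mul_mem_left _ (by rw [← hAn n]; exact hAmem))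
        (I.mul_mem_left _ (by rw [← hBn n]; exact hBmem))
    have hy : (Bn n) ^ t ∈ I := by
      rw [← hU (An n) (Bn n)]
      exact I.add_mem (I.mul_mem_left _ (by rw [← hAn n]; exact hAmem))
        (I.mul_mem_left _ (by rw [← hBn n]; exact hBmem))
    have h1 : Ideal.span ({An n, Bn n} : Set A) ≤ I.radical := by
      rw [Ideal.span_le]
      rintro x (rfl | rfl)
      · exact ⟨t, hx⟩
      · exact ⟨t, by simpa using hy⟩
    have hrad : I.radical = ⊤ := top_unique (ih ▸ h1)
    rwa [Ideal.radical_eq_top] at hrad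
end

section
/- Let F be a field with a discrete valuation ord, and define deg(x) = -ord(x) for x in the valuation ring's field of fractions. Let P(x) = Σ_{i=0}^{d_P} c_{P,d_P-i} x^i and Q(x) = Σ_{j=0}^{d_Q} c_{Q,d_Q-j} x^j with coefficients in F, where the leading coefficients c_{P,0}, c_{Q,0} have deg = 0 (they are 'constants'), d_P ≥ d_Q + 2, and d := d_P, s := d_P - d_Q. Let m_1 = max_{1≤i≤d_P} deg(c_{P,i})/i, m_2 = max_{1≤j≤d_Q} deg(c_{Q,j})/j, m = m_1 + m_2. Let a, b ∈ F with d_a = deg(a), d_b = deg(b), and d_c := d_a - d_b > m. Define A_0 = a, B_0 = b, A_{n+1} = P̃(A_n, B_n), B_{n+1} = Q̃(A_n, B_n) where P̃, Q̃ are the homogenizations of P, Q. Then for all n ≥ 1, deg(A_n) = d_a · d^n and deg(B_n) = d_a · d^n − d_c · s^n. -/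
/-!
Induct on the invariant `deg A_n - deg B_n = d_c s^n`. Since `d_c > m ≥ m₁, m₂` and `s^n ≥ 1`,
each coefficient satisfies `deg c_k < k (deg A_n - deg B_n)`, so in both homogeneous forms the
term with the constant leading coefficient strictly dominates every other term. The ultrametric
inequality then gives `deg A_{n+1} = d_P deg A_n` and
`deg B_{n+1} = d_Q deg A_n + s deg B_n`, which is exactly the claimed recursion.
-/

open Finset

section Multiplicative

variable {M : Type*} [MonoidWithZero M] [NoZeroDivisors M] {deg : M → ℤ}

theorem deg_pow_of_deg_mul (hmul : ∀ x y : M, x ≠ 0 → y ≠ 0 → deg (x * y) = deg x + deg y)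
    {x : M} (hx : x ≠ 0) (k : ℕ) : deg (x ^ k) = k * deg x := by
  induction k with
  | zero =>
    have h1 : (1 : M) ≠ 0 := fun h => hx (by rw [← mul_one x, h, mul_zero])
    have := hmul x 1 hx h1
    rw [mul_one] at this
    simp only [pow_zero, CharP.cast_eq_zero, zero_mul]
    omega
  | succ k ih =>
    rw [pow_succ, hmul _ _ (pow_ne_zero _ hx) hx, ih]
    push_cast
    ring

theorem deg_mul_pow_mul_pow_of_deg_mul
    (hmul : ∀ x y : M, x ≠ 0 → y ≠ 0 → deg (x * y) = deg x + deg y)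
    {c x y : M} (hc : c ≠ 0) (hx : x ≠ 0) (hy : y ≠ 0) (i j : ℕ) :
    deg (c * x ^ i * y ^ j) = deg c + i * deg x + j * deg y := by
  rw [hmul _ _ (mul_ne_zero hc (pow_ne_zero _ hx)) (pow_ne_zero _ hy),
    hmul _ _ hc (pow_ne_zero _ hx), deg_pow_of_deg_mul hmul hx, deg_pow_of_deg_mul hmul hy]

end Multiplicative

section Additive

variable {M : Type*} [AddCommMonoid M] {deg : M → ℤ}

theorem deg_sum_lt_of_deg_add_le
    (hadd : ∀ x y : M, x ≠ 0 → y ≠ 0 → x + y ≠ 0 → deg (x + y) ≤ max (deg x) (deg y))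
    {ι : Type*} {s : Finset ι} {f : ι → M} {D : ℤ}
    (hf : ∀ i ∈ s, f i ≠ 0 → deg (f i) < D) (hs : ∑ i ∈ s, f i ≠ 0) :
    deg (∑ i ∈ s, f i) < D := by
  induction s using Finset.cons_induction with
  | empty => exact absurd sum_empty hs
  | cons a s has ih =>
    rw [sum_cons] at hs ⊢
    have hf' : ∀ i ∈ s, f i ≠ 0 → deg (f i) < D := fun i hi => hf i (mem_cons_of_mem hi)
    by_cases ha : f a = 0
    · rw [ha, zero_add] at hs ⊢
      exact ih hf' hs
    by_cases hrest : ∑ i ∈ s, f i = 0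
    · rw [hrest, add_zero]
      exact hf a (mem_cons_self a s) ha
    exact (hadd _ _ ha hrest hs).trans_lt (max_lt (hf a (mem_cons_self a s) ha) (ih hf' hrest))

theorem deg_sum_range_succ_eq_of_lt
    (hadd : ∀ x y : M, x ≠ 0 → y ≠ 0 → x + y ≠ 0 → deg (x + y) ≤ max (deg x) (deg y))
    (hadd' : ∀ x y : M, x ≠ 0 → y ≠ 0 → deg x ≠ deg y →
      x + y ≠ 0 ∧ deg (x + y) = max (deg x) (deg y))
    {N : ℕ} {f : ℕ → M} (h0 : f 0 ≠ 0)
    (hlt : ∀ i, 1 ≤ i → i ≤ N → f i ≠ 0 → deg (f i) < deg (f 0)) :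
    ∑ i ∈ range (N + 1), f i ≠ 0 ∧ deg (∑ i ∈ range (N + 1), f i) = deg (f 0) := by
  rw [sum_range_succ']
  by_cases htail : ∑ i ∈ range N, f (i + 1) = 0
  · rw [htail, zero_add]
    exact ⟨h0, rfl⟩
  have htail_lt : deg (∑ i ∈ range N, f (i + 1)) < deg (f 0) :=
    deg_sum_lt_of_deg_add_le hadd
      (fun i hi => hlt (i + 1) (by omega) (by have := mem_range.mp hi; omega)) htail
  obtain ⟨hne, hdeg⟩ := hadd' _ _ htail h0 htail_lt.ne
  exact ⟨hne, hdeg.trans (max_eq_right htail_lt.le)⟩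

end Additive

theorem deg_homogeneous_sum_eq {R : Type*} [CommSemiring R] [NoZeroDivisors R] {deg : R → ℤ}
    (hmul : ∀ x y : R, x ≠ 0 → y ≠ 0 → deg (x * y) = deg x + deg y)
    (hadd : ∀ x y : R, x ≠ 0 → y ≠ 0 → x + y ≠ 0 → deg (x + y) ≤ max (deg x) (deg y))
    (hadd' : ∀ x y : R, x ≠ 0 → y ≠ 0 → deg x ≠ deg y →
      x + y ≠ 0 ∧ deg (x + y) = max (deg x) (deg y))
    {N e : ℕ} {c : ℕ → R} {m : ℚ} {x y : R} (hx : x ≠ 0) (hy : y ≠ 0)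
    (hc0 : c 0 ≠ 0) (hc0deg : deg (c 0) = 0)
    (hc : ∀ k, 1 ≤ k → k ≤ N → c k ≠ 0 → (deg (c k) : ℚ) ≤ m * k)
    (hm : m < ((deg x - deg y : ℤ) : ℚ)) :
    ∑ k ∈ range (N + 1), c k * x ^ (N - k) * y ^ (k + e) ≠ 0 ∧
      deg (∑ k ∈ range (N + 1), c k * x ^ (N - k) * y ^ (k + e)) = N * deg x + e * deg y := by
  have hmonomial := fun {k : ℕ} (hck : c k ≠ 0) =>
    deg_mul_pow_mul_pow_of_deg_mul hmul hck hx hy (N - k) (k + e)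
  have hlead : deg (c 0 * x ^ (N - 0) * y ^ (0 + e)) = N * deg x + e * deg y := by
    rw [hmonomial hc0, hc0deg]
    simp
  refine hlead ▸ deg_sum_range_succ_eq_of_lt hadd hadd'
    (mul_ne_zero (mul_ne_zero hc0 (pow_ne_zero _ hx)) (pow_ne_zero _ hy)) ?_
  intro k hk1 hkN hterm
  have hck : c k ≠ 0 := fun h => hterm (by rw [h, zero_mul, zero_mul])
  have hcoeff : deg (c k) < k * (deg x - deg y) := by
    have hk : (1 : ℚ) ≤ k := by exact_mod_cast hk1
    have : (deg (c k) : ℚ) < k * ((deg x - deg y : ℤ) : ℚ) :=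
      (hc k hk1 hkN hck).trans_lt (by rw [mul_comm]; gcongr)
    exact_mod_cast this
  rw [hlead, hmonomial hck, Nat.cast_sub hkN]
  push_cast
  linarith

/-- degree growth of the numerators and denominators of the iterates
`f^n(c) = A_n / B_n` for a family of rational maps with `d_P ≥ d_Q + 2`, constant
leading coefficients, and `deg c > m = m₁ + m₂`.  Here `deg` is the negative of a
discrete valuation on the function field `F`: it is additive on products, satisfies
`deg(x+y) ≤ max(deg x, deg y)` with equality when the degrees differ. -/
theorem stmt1 {F : Type*} [Field F]
    (deg : F → ℤ)
    (hmul : ∀ x y : F, x ≠ 0 → y ≠ 0 → deg (x * y) = deg x + deg y)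
    (hadd : ∀ x y : F, x ≠ 0 → y ≠ 0 → x + y ≠ 0 → deg (x + y) ≤ max (deg x) (deg y))
    (hadd' : ∀ x y : F, x ≠ 0 → y ≠ 0 → deg x ≠ deg y →
      x + y ≠ 0 ∧ deg (x + y) = max (deg x) (deg y))
    (dP dQ : ℕ) (hdPQ : dQ + 2 ≤ dP)
    (cP cQ : ℕ → F)
    (hcP0 : cP 0 ≠ 0) (hcP0deg : deg (cP 0) = 0)
    (hcQ0 : cQ 0 ≠ 0) (hcQ0deg : deg (cQ 0) = 0)
    (m1 m2 : ℚ) (hm1pos : 0 ≤ m1) (hm2pos : 0 ≤ m2)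
    (hm1 : ∀ i : ℕ, 1 ≤ i → i ≤ dP → cP i ≠ 0 → (deg (cP i) : ℚ) ≤ m1 * i)
    (hm2 : ∀ j : ℕ, 1 ≤ j → j ≤ dQ → cQ j ≠ 0 → (deg (cQ j) : ℚ) ≤ m2 * j)
    (a b : F) (ha : a ≠ 0) (hb : b ≠ 0)
    (dc : ℤ) (hdc : dc = deg a - deg b)
    (hdcm : (m1 + m2 : ℚ) < (dc : ℚ))
    (An Bn : ℕ → F) (hA0 : An 0 = a) (hB0 : Bn 0 = b)
    -- `A_{n+1} = P̃(A_n, B_n)` with `P̃(X,Y) = ∑_{k=0}^{d_P} c_{P,k} X^{d_P-k} Y^k`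
    (hAn : ∀ n, An (n + 1) =
      ∑ k ∈ Finset.range (dP + 1), cP k * (An n) ^ (dP - k) * (Bn n) ^ k)
    -- `B_{n+1} = B_n^{s} Q̃(A_n, B_n)` with `Q̃(X,Y) = ∑_{k=0}^{d_Q} c_{Q,k} X^{d_Q-k} Y^k`
    (hBn : ∀ n, Bn (n + 1) =
      ∑ k ∈ Finset.range (dQ + 1), cQ k * (An n) ^ (dQ - k) * (Bn n) ^ (k + (dP - dQ))) :
    ∀ n : ℕ, 1 ≤ n → An n ≠ 0 ∧ Bn n ≠ 0 ∧
      deg (An n) = deg a * (dP : ℤ) ^ n ∧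
      deg (Bn n) = deg a * (dP : ℤ) ^ n - dc * ((dP - dQ : ℕ) : ℤ) ^ n := by
  set s : ℤ := ((dP - dQ : ℕ) : ℤ) with hs
  have hs1 : 1 ≤ s := by omega
  have hdQs : (dQ : ℤ) + s = dP := by omega
  have hdc_pos : (0 : ℚ) < dc := (add_nonneg hm1pos hm2pos).trans_lt hdcm
  suffices key : ∀ n, An n ≠ 0 ∧ Bn n ≠ 0 ∧ deg (An n) = deg a * (dP : ℤ) ^ n ∧
      deg (Bn n) = deg a * (dP : ℤ) ^ n - dc * s ^ n from fun n _ => key n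
  intro n
  induction n with
  | zero => exact ⟨hA0 ▸ ha, hB0 ▸ hb, by simp [hA0], by simp [hB0, hdc]⟩
  | succ n ih =>
    obtain ⟨hA, hB, hdA, hdB⟩ := ih
    have hgap : dc ≤ deg (An n) - deg (Bn n) := by
      rw [hdA, hdB, sub_sub_cancel]
      exact le_mul_of_one_le_right (by exact_mod_cast hdc_pos.le) (one_le_pow₀ hs1)
    have hgapq : (dc : ℚ) ≤ ((deg (An n) - deg (Bn n) : ℤ) : ℚ) := by exact_mod_cast hgap
    obtain ⟨hA', hdA'⟩ := deg_homogeneous_sum_eq (e := 0) hmul hadd hadd' hA hB hcP0 hcP0deg hm1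
      (by linarith)
    obtain ⟨hB', hdB'⟩ := deg_homogeneous_sum_eq (e := dP - dQ) hmul hadd hadd' hA hB hcQ0
      hcQ0deg hm2 (by linarith)
    simp only [add_zero] at hA' hdA'
    rw [hAn, hBn]
    refine ⟨hA', hB', ?_, ?_⟩
    · rw [hdA', hdA]
      ring
    · rw [hdB', hdA, hdB, ← hs, ← hdQs]
      ring
end

section
/- With the notation of the degree computation (d_P ≥ d_Q + 2, leading coefficients constant, deg(c) > m, A_n and B_n defined recursively), the leading coefficient of A_n equals c_{P,0}^{(d^n − 1)/(d − 1)} · c_a^{d^n}, where c_a is the leading coefficient of a. -/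
lemma aux_sum_small {F : Type*} [Field F] (deg : F → ℤ)
    (hadd : ∀ x y : F, x ≠ 0 → y ≠ 0 → x + y ≠ 0 → deg (x + y) ≤ max (deg x) (deg y))
    (D : ℤ) (s : Finset ℕ) (t : ℕ → F)
    (h : ∀ k ∈ s, t k = 0 ∨ (t k ≠ 0 ∧ deg (t k) < D)) :
    (∑ k ∈ s, t k) = 0 ∨ ((∑ k ∈ s, t k) ≠ 0 ∧ deg (∑ k ∈ s, t k) < D) := by
  induction s using Finset.cons_induction with
  | empty => simp
  | cons a s hna ih =>
    rw [Finset.sum_cons]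
    have h1 := h a (Finset.mem_cons_self _ _)
    have h2 := ih (fun k hk => h k (Finset.mem_cons_of_mem hk))
    rcases h1 with h1 | ⟨hne, hlt⟩
    · simpa [h1] using h2
    rcases h2 with h2 | ⟨hne2, hlt2⟩
    · rw [h2, add_zero]; exact Or.inr ⟨hne, hlt⟩
    by_cases hz : t a + ∑ k ∈ s, t k = 0
    · exact Or.inl hz
    · exact Or.inr ⟨hz, lt_of_le_of_lt (hadd _ _ hne hne2 hz) (max_lt hlt hlt2)⟩

lemma aux_dom {F : Type*} [Field F] (deg : F → ℤ) (lc : F → F)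
    (hadd : ∀ x y : F, x ≠ 0 → y ≠ 0 → x + y ≠ 0 → deg (x + y) ≤ max (deg x) (deg y))
    (hadd' : ∀ x y : F, x ≠ 0 → y ≠ 0 → deg x ≠ deg y →
      x + y ≠ 0 ∧ deg (x + y) = max (deg x) (deg y))
    (hlcadd : ∀ x y : F, x ≠ 0 → (y = 0 ∨ (y ≠ 0 ∧ deg y < deg x)) → lc (x + y) = lc x)
    (t : ℕ → F) (N : ℕ) (h0 : t 0 ≠ 0)
    (h : ∀ k, 1 ≤ k → k ≤ N → t k = 0 ∨ (t k ≠ 0 ∧ deg (t k) < deg (t 0))) :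
    (∑ k ∈ Finset.range (N+1), t k) ≠ 0 ∧
      deg (∑ k ∈ Finset.range (N+1), t k) = deg (t 0) ∧
      lc (∑ k ∈ Finset.range (N+1), t k) = lc (t 0) := by
  have hsplit : (∑ k ∈ Finset.range (N+1), t k) = t 0 + ∑ k ∈ Finset.range N, t (k+1) := by
    rw [Finset.sum_range_succ', add_comm]
  have hr := aux_sum_small deg hadd (deg (t 0)) (Finset.range N) (fun k => t (k+1))
    (fun k hk => h (k+1) (by omega) (by simpa using Finset.mem_range.mp hk))
  rw [hsplit]
  rcases hr with hr | ⟨hrne, hrlt⟩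
  · rw [hr, add_zero]; exact ⟨h0, rfl, rfl⟩
  · obtain ⟨hne, hdeg⟩ := hadd' _ _ h0 hrne (by omega)
    exact ⟨hne, by rw [hdeg, max_eq_left hrlt.le], hlcadd _ _ h0 (Or.inr ⟨hrne, hrlt⟩)⟩

lemma aux_geom (d : ℕ) (hd : 2 ≤ d) (n : ℕ) :
    (d ^ n - 1) / (d - 1) = ∑ i ∈ Finset.range n, d ^ i := by
  have h : (d - 1) * ∑ i ∈ Finset.range n, d ^ i = d ^ n - 1 := by
    induction n with
    | zero => simp
    | succ n ih =>
      rw [Finset.sum_range_succ, Nat.mul_add, ih]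
      have hx : 1 ≤ d ^ n := Nat.one_le_pow _ _ (by omega)
      have h1 : (d - 1) * d ^ n = d * d ^ n - d ^ n := Nat.sub_one_mul d (d ^ n)
      have h3 : d ^ (n+1) = d * d ^ n := by rw [pow_succ]; ring
      have h2 : d ^ n ≤ d * d ^ n := Nat.le_mul_of_pos_left _ (by omega)
      omega
  rw [← h, Nat.mul_div_cancel_left _ (show 0 < d - 1 by omega)]

/-- with the notation of the degree computation, the leading coefficient
of `A_n` equals `c_{P,0}^{(d^n-1)/(d-1)} · c_a^{d^n}`, where `c_a = lc a`.  The leading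
coefficient map `lc` is multiplicative, agrees with the identity on "constants"
(elements of degree 0) and satisfies `lc (x + y) = lc x` when `y = 0` or `deg y < deg x`. -/
theorem stmt2 {F : Type*} [Field F]
    (deg : F → ℤ)
    (hmul : ∀ x y : F, x ≠ 0 → y ≠ 0 → deg (x * y) = deg x + deg y)
    (hadd : ∀ x y : F, x ≠ 0 → y ≠ 0 → x + y ≠ 0 → deg (x + y) ≤ max (deg x) (deg y))
    (hadd' : ∀ x y : F, x ≠ 0 → y ≠ 0 → deg x ≠ deg y →
      x + y ≠ 0 ∧ deg (x + y) = max (deg x) (deg y))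
    (lc : F → F)
    (hlcne : ∀ x : F, x ≠ 0 → lc x ≠ 0)
    (hlcmul : ∀ x y : F, x ≠ 0 → y ≠ 0 → lc (x * y) = lc x * lc y)
    (hlcconst : ∀ x : F, x ≠ 0 → deg x = 0 → lc x = x)
    (hlcadd : ∀ x y : F, x ≠ 0 → (y = 0 ∨ (y ≠ 0 ∧ deg y < deg x)) → lc (x + y) = lc x)
    (dP dQ : ℕ) (hdPQ : dQ + 2 ≤ dP)
    (cP cQ : ℕ → F)
    (hcP0 : cP 0 ≠ 0) (hcP0deg : deg (cP 0) = 0)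
    (hcQ0 : cQ 0 ≠ 0) (hcQ0deg : deg (cQ 0) = 0)
    (m1 m2 : ℚ) (hm1pos : 0 ≤ m1) (hm2pos : 0 ≤ m2)
    (hm1 : ∀ i : ℕ, 1 ≤ i → i ≤ dP → cP i ≠ 0 → (deg (cP i) : ℚ) ≤ m1 * i)
    (hm2 : ∀ j : ℕ, 1 ≤ j → j ≤ dQ → cQ j ≠ 0 → (deg (cQ j) : ℚ) ≤ m2 * j)
    (a b : F) (ha : a ≠ 0) (hb : b ≠ 0)
    (dc : ℤ) (hdc : dc = deg a - deg b)
    (hdcm : (m1 + m2 : ℚ) < (dc : ℚ))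
    (An Bn : ℕ → F) (hA0 : An 0 = a) (hB0 : Bn 0 = b)
    (hAn : ∀ n, An (n + 1) =
      ∑ k ∈ Finset.range (dP + 1), cP k * (An n) ^ (dP - k) * (Bn n) ^ k)
    (hBn : ∀ n, Bn (n + 1) =
      ∑ k ∈ Finset.range (dQ + 1), cQ k * (An n) ^ (dQ - k) * (Bn n) ^ (k + (dP - dQ))) :
    ∀ n : ℕ, lc (An n) = cP 0 ^ ((dP ^ n - 1) / (dP - 1)) * (lc a) ^ (dP ^ n) := by
  have hdeg1 : deg 1 = 0 := by
    have h := hmul 1 1 one_ne_zero one_ne_zero; rw [one_mul] at h; linarith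
  have hlc1 : lc 1 = 1 := hlcconst 1 one_ne_zero hdeg1
  have hdegpow : ∀ (x : F), x ≠ 0 → ∀ n : ℕ, deg (x ^ n) = n * deg x := by
    intro x hx n
    induction n with
    | zero => simpa using hdeg1
    | succ n ih =>
      rw [pow_succ, hmul _ _ (pow_ne_zero n hx) hx, ih]; push_cast; ring
  have hlcpow : ∀ (x : F), x ≠ 0 → ∀ n : ℕ, lc (x ^ n) = lc x ^ n := by
    intro x hx n
    induction n with
    | zero => simpa using hlc1
    | succ n ih => rw [pow_succ, hlcmul _ _ (pow_ne_zero n hx) hx, ih, pow_succ]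
  have hdc1 : (1:ℤ) ≤ dc := by
    have h0 : (0:ℚ) < (dc:ℚ) := lt_of_le_of_lt (add_nonneg hm1pos hm2pos) hdcm
    have : (0:ℤ) < dc := by exact_mod_cast h0
    omega
  have hm1dc : m1 < (dc:ℚ) := lt_of_le_of_lt (le_add_of_nonneg_right hm2pos) hdcm
  have hm2dc : m2 < (dc:ℚ) := lt_of_le_of_lt (le_add_of_nonneg_left hm1pos) hdcm
  have key : ∀ n : ℕ, An n ≠ 0 ∧ Bn n ≠ 0 ∧ dc ≤ deg (An n) - deg (Bn n) ∧
      lc (An n) = cP 0 ^ (∑ i ∈ Finset.range n, dP ^ i) * lc a ^ dP ^ n := by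
    intro n
    induction n with
    | zero => refine ⟨by rwa [hA0], by rwa [hB0], ?_, by simp [hA0]⟩
              rw [hA0, hB0, hdc]
    | succ n ih =>
      obtain ⟨hAne, hBne, hd, hlcA⟩ := ih
      set A := An n with hAdef
      set B := Bn n with hBdef
      have hdQQ : (dc:ℚ) ≤ (deg A : ℚ) - (deg B : ℚ) := by exact_mod_cast hd
      -- the A-sum
      have hA0ne : cP 0 * A ^ (dP - 0) * B ^ 0 ≠ 0 :=
        mul_ne_zero (mul_ne_zero hcP0 (pow_ne_zero _ hAne)) (pow_ne_zero _ hBne)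
      have hdegt0A : deg (cP 0 * A ^ (dP - 0) * B ^ 0) = dP * deg A := by
        rw [hmul _ _ (mul_ne_zero hcP0 (pow_ne_zero _ hAne)) (pow_ne_zero _ hBne),
            hmul _ _ hcP0 (pow_ne_zero _ hAne), hdegpow A hAne, hdegpow B hBne, hcP0deg,
            Nat.sub_zero]
        push_cast; ring
      have hArest : ∀ k, 1 ≤ k → k ≤ dP →
          cP k * A ^ (dP - k) * B ^ k = 0 ∨
          (cP k * A ^ (dP - k) * B ^ k ≠ 0 ∧
            deg (cP k * A ^ (dP - k) * B ^ k) < deg (cP 0 * A ^ (dP - 0) * B ^ 0)) := by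
        intro k hk1 hkN
        by_cases hck : cP k = 0
        · left; simp [hck]
        right
        have htne : cP k * A ^ (dP - k) * B ^ k ≠ 0 :=
          mul_ne_zero (mul_ne_zero hck (pow_ne_zero _ hAne)) (pow_ne_zero _ hBne)
        refine ⟨htne, ?_⟩
        have hdegtk : deg (cP k * A ^ (dP - k) * B ^ k) =
            deg (cP k) + (dP - k : ℕ) * deg A + k * deg B := by
          rw [hmul _ _ (mul_ne_zero hck (pow_ne_zero _ hAne)) (pow_ne_zero _ hBne),
              hmul _ _ hck (pow_ne_zero _ hAne), hdegpow A hAne, hdegpow B hBne]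
        rw [hdegtk, hdegt0A]
        have hq1 : (deg (cP k) : ℚ) ≤ m1 * k := hm1 k hk1 hkN hck
        have hkpos : (0:ℚ) < (k:ℚ) := by exact_mod_cast hk1
        have hQ : (deg (cP k) : ℚ) + ((dP - k : ℕ) : ℚ) * deg A + (k:ℚ) * deg B
            < (dP : ℚ) * deg A := by
          rw [Nat.cast_sub hkN]
          nlinarith [mul_lt_mul_of_pos_right hm1dc hkpos,
            mul_le_mul_of_nonneg_left hdQQ hkpos.le]
        exact_mod_cast hQ
      have hAdom := aux_dom deg lc hadd hadd' hlcadd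
        (fun k => cP k * A ^ (dP - k) * B ^ k) dP hA0ne hArest
      rw [← hAn n] at hAdom
      obtain ⟨hA1ne, hA1deg, hA1lc⟩ := hAdom
      rw [hdegt0A] at hA1deg
      -- the B-sum
      have hB0ne : cQ 0 * A ^ (dQ - 0) * B ^ (0 + (dP - dQ)) ≠ 0 :=
        mul_ne_zero (mul_ne_zero hcQ0 (pow_ne_zero _ hAne)) (pow_ne_zero _ hBne)
      have hdegt0B : deg (cQ 0 * A ^ (dQ - 0) * B ^ (0 + (dP - dQ))) =
          dQ * deg A + (dP - dQ : ℕ) * deg B := by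
        rw [hmul _ _ (mul_ne_zero hcQ0 (pow_ne_zero _ hAne)) (pow_ne_zero _ hBne),
            hmul _ _ hcQ0 (pow_ne_zero _ hAne), hdegpow A hAne, hdegpow B hBne, hcQ0deg,
            Nat.sub_zero, Nat.zero_add]
        push_cast; ring
      have hBrest : ∀ k, 1 ≤ k → k ≤ dQ →
          cQ k * A ^ (dQ - k) * B ^ (k + (dP - dQ)) = 0 ∨
          (cQ k * A ^ (dQ - k) * B ^ (k + (dP - dQ)) ≠ 0 ∧
            deg (cQ k * A ^ (dQ - k) * B ^ (k + (dP - dQ))) <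
              deg (cQ 0 * A ^ (dQ - 0) * B ^ (0 + (dP - dQ)))) := by
        intro k hk1 hkN
        by_cases hck : cQ k = 0
        · left; simp [hck]
        right
        have htne : cQ k * A ^ (dQ - k) * B ^ (k + (dP - dQ)) ≠ 0 :=
          mul_ne_zero (mul_ne_zero hck (pow_ne_zero _ hAne)) (pow_ne_zero _ hBne)
        refine ⟨htne, ?_⟩
        have hdegtk : deg (cQ k * A ^ (dQ - k) * B ^ (k + (dP - dQ))) =
            deg (cQ k) + (dQ - k : ℕ) * deg A + (k + (dP - dQ) : ℕ) * deg B := by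
          rw [hmul _ _ (mul_ne_zero hck (pow_ne_zero _ hAne)) (pow_ne_zero _ hBne),
              hmul _ _ hck (pow_ne_zero _ hAne), hdegpow A hAne, hdegpow B hBne]
        rw [hdegtk, hdegt0B]
        have hq1 : (deg (cQ k) : ℚ) ≤ m2 * k := hm2 k hk1 hkN hck
        have hkpos : (0:ℚ) < (k:ℚ) := by exact_mod_cast hk1
        have hQ : (deg (cQ k) : ℚ) + ((dQ - k : ℕ) : ℚ) * deg A
            + ((k + (dP - dQ) : ℕ) : ℚ) * deg B
            < (dQ : ℚ) * deg A + ((dP - dQ : ℕ) : ℚ) * deg B := by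
          rw [Nat.cast_sub hkN]
          push_cast [Nat.cast_sub (show dQ ≤ dP by omega)]
          nlinarith [mul_lt_mul_of_pos_right hm2dc hkpos,
            mul_le_mul_of_nonneg_left hdQQ hkpos.le]
        exact_mod_cast hQ
      have hBdom := aux_dom deg lc hadd hadd' hlcadd
        (fun k => cQ k * A ^ (dQ - k) * B ^ (k + (dP - dQ))) dQ hB0ne hBrest
      rw [← hBn n] at hBdom
      obtain ⟨hB1ne, hB1deg, _⟩ := hBdom
      rw [hdegt0B] at hB1deg
      refine ⟨hA1ne, hB1ne, ?_, ?_⟩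
      · rw [hA1deg, hB1deg, Nat.cast_sub (show dQ ≤ dP by omega)]
        have h2 : (2:ℤ) ≤ (dP:ℤ) - dQ := by exact_mod_cast (by omega : (2:ℤ) ≤ (dP:ℤ) - (dQ:ℤ))
        nlinarith [mul_le_mul h2 hd (by omega : (0:ℤ) ≤ dc) (by omega : (0:ℤ) ≤ (dP:ℤ) - dQ)]
      · rw [hA1lc, hlcmul _ _ (mul_ne_zero hcP0 (pow_ne_zero _ hAne)) (pow_ne_zero _ hBne),
            hlcmul _ _ hcP0 (pow_ne_zero _ hAne), hlcpow A hAne, hlcpow B hBne,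
            hlcconst _ hcP0 hcP0deg, Nat.sub_zero, pow_zero, mul_one, hlcA]
        rw [geom_sum_succ, mul_pow, ← pow_mul, ← pow_mul, pow_succ, pow_add, pow_one]
        ring
  intro n
  rw [(key n).2.2.2, aux_geom dP (by omega) n]
end

section
/- Let |·|_v be an absolute value on a field, let d ≥ 3 be an integer, and let P, Q be single-variable polynomials of degree exactly d over the field. Suppose L_6 > 1 and δ > 0 satisfy: min(|P(z)|_v, |Q(z)|_v) ≥ δ|z|_v^d whenever |z|_v ≥ L_6; and C ≥ 1 satisfies max(|P(z)|_v, |Q(z)|_v) ≤ C·max(1,|z|_v)^d for all z. Fix a, b nonzero, define A_0 = a, B_0 = b, A_{n+1} = P(A_n) + λ B_n, B_{n+1} = Q(B_n) + μ A_n, and M_n = max(|A_n|_v, |B_n|_v, 1). Then for any L > 1 there exist constants 0 < C_{16} ≤ C_{17} (depending only on v, L, δ, C, L_6) such that C_{16} ≤ M_{n+1}/M_n^d ≤ C_{17} for all n ≥ 1 and all λ, μ with max(|λ|_v, |μ|_v) ≤ L. -/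
/-! The upper bound is the triangle inequality: each coordinate of the next pair is a polynomial
value of size `≤ C M_n^d` plus a perturbation of size `≤ L M_n ≤ L M_n^d`. For the lower bound,
put `L₇ = max L₆ (2L/δ)`. If `M_n ≤ L₇` then `M_{n+1}/M_n^d ≥ L₇^{-d}` simply because
`M_{n+1} ≥ 1`. Otherwise the larger coordinate `z` of the pair has `|z| = M_n ≥ L₆`, so its
polynomial value has size `≥ δ M_n^d`, while the perturbation is at most
`L M_n ≤ (δ/2) M_n^2 ≤ (δ/2) M_n^d`; hence `M_{n+1} ≥ (δ/2) M_n^d`. -/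

section MaxNorm

variable {R : Type*}

section Semiring

variable [Semiring R] (v : AbsoluteValue R ℝ)

def maxNorm (x y : R) : ℝ := max (max (v x) (v y)) 1

lemma one_le_maxNorm (x y : R) : 1 ≤ maxNorm v x y := le_max_right _ _

lemma le_maxNorm_left (x y : R) : v x ≤ maxNorm v x y := le_max_of_le_left (le_max_left _ _)

lemma le_maxNorm_right (x y : R) : v y ≤ maxNorm v x y := le_max_of_le_left (le_max_right _ _)

variable {v}

lemma abv_add_mul_le {p l y : R} {C L M : ℝ} {d : ℕ} (hd : d ≠ 0) (hM : 1 ≤ M)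
    (hp : v p ≤ C * M ^ d) (hl : v l ≤ L) (hy : v y ≤ M) :
    v (p + l * y) ≤ (C + L) * M ^ d :=
  calc v (p + l * y) ≤ v p + v l * v y := by rw [← map_mul v]; exact v.add_le _ _
    _ ≤ C * M ^ d + L * M ^ d :=
        add_le_add hp <| mul_le_mul hl (hy.trans (le_self_pow₀ hM hd)) (v.nonneg _)
          ((v.nonneg l).trans hl)
    _ = (C + L) * M ^ d := by ring

lemma maxNorm_step_le {f g : R → R} {C L : ℝ} {d : ℕ} (hd : d ≠ 0) (hC : 1 ≤ C)
    (hfg : ∀ z, max (v (f z)) (v (g z)) ≤ C * max 1 (v z) ^ d)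
    {l m : R} (hl : v l ≤ L) (hm : v m ≤ L) (x y : R) :
    maxNorm v (f x + l * y) (g y + m * x) ≤ (C + L) * maxNorm v x y ^ d := by
  have hM := one_le_maxNorm v x y
  have hvalue : ∀ z, v z ≤ maxNorm v x y → max (v (f z)) (v (g z)) ≤ C * maxNorm v x y ^ d :=
    fun z hz => (hfg z).trans <| by gcongr; exact max_le hM hz
  have hA := abv_add_mul_le hd hM ((le_max_left _ _).trans (hvalue x (le_maxNorm_left v x y))) hl
    (le_maxNorm_right v x y)
  have hB := abv_add_mul_le hd hM ((le_max_right _ _).trans (hvalue y (le_maxNorm_right v x y)))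
    hm (le_maxNorm_left v x y)
  have hone : 1 ≤ (C + L) * maxNorm v x y ^ d :=
    one_le_mul_of_one_le_of_one_le (by linarith [(v.nonneg l).trans hl]) (one_le_pow₀ hM)
  exact max_le (max_le hA hB) hone

lemma maxNorm_step_div_pow_le {f g : R → R} {C L : ℝ} {d : ℕ} (hd : d ≠ 0) (hC : 1 ≤ C)
    (hfg : ∀ z, max (v (f z)) (v (g z)) ≤ C * max 1 (v z) ^ d)
    {l m : R} (hl : v l ≤ L) (hm : v m ≤ L) (x y : R) :
    maxNorm v (f x + l * y) (g y + m * x) / maxNorm v x y ^ d ≤ C + L :=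
  (div_le_iff₀ (pow_pos (zero_lt_one.trans_le (one_le_maxNorm v x y)) d)).2
    (maxNorm_step_le hd hC hfg hl hm x y)

end Semiring

section Ring

variable [Ring R] {v : AbsoluteValue R ℝ}

lemma half_mul_pow_le_abv_add_mul {p l y : R} {δ L M : ℝ} {d : ℕ} (hd : 2 ≤ d) (hδ : 0 < δ)
    (hM : 1 ≤ M) (hML : 2 * L / δ ≤ M) (hp : δ * M ^ d ≤ v p) (hl : v l ≤ L) (hy : v y ≤ M) :
    δ / 2 * M ^ d ≤ v (p + l * y) := by
  have hly : v (l * y) ≤ δ / 2 * M ^ d :=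
    calc v (l * y) ≤ L * M := by
          rw [map_mul]; exact mul_le_mul hl hy (v.nonneg _) ((v.nonneg l).trans hl)
      _ ≤ δ / 2 * M ^ 2 := by
          rw [div_le_iff₀ hδ] at hML; nlinarith
      _ ≤ δ / 2 * M ^ d := by gcongr
  linarith [v.le_add p (l * y)]

lemma maxNorm_eq_left_of_le {x y : R} (hyx : v y ≤ v x) (h1 : 1 < maxNorm v x y) :
    maxNorm v x y = v x := by
  unfold maxNorm at *
  rw [max_eq_left hyx] at *
  exact max_eq_left (le_of_lt (by simpa using h1))

lemma maxNorm_comm (x y : R) : maxNorm v x y = maxNorm v y x := by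
  unfold maxNorm; rw [max_comm (v x)]

lemma half_mul_pow_le_maxNorm_step {f g : R → R} {δ L₀ L : ℝ} {d : ℕ} (hd : 2 ≤ d) (hδ : 0 < δ)
    (hL₀ : 1 < L₀) (hfg : ∀ z, L₀ ≤ v z → δ * v z ^ d ≤ min (v (f z)) (v (g z)))
    {l m : R} (hl : v l ≤ L) (hm : v m ≤ L) {x y : R}
    (hML₀ : L₀ ≤ maxNorm v x y) (hML : 2 * L / δ ≤ maxNorm v x y) :
    δ / 2 * maxNorm v x y ^ d ≤ maxNorm v (f x + l * y) (g y + m * x) := by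
  have hM := one_le_maxNorm v x y
  rcases le_total (v y) (v x) with hyx | hxy
  · have hx := maxNorm_eq_left_of_le hyx (hL₀.trans_le hML₀)
    have hp : δ * maxNorm v x y ^ d ≤ v (f x) := by
      rw [hx] at hML₀ ⊢; exact (hfg x hML₀).trans (min_le_left _ _)
    exact (half_mul_pow_le_abv_add_mul hd hδ hM hML hp hl (le_maxNorm_right v x y)).trans
      (le_maxNorm_left v _ _)
  · rw [maxNorm_comm x y] at hML₀ hML hM ⊢
    have hy := maxNorm_eq_left_of_le hxy (hL₀.trans_le hML₀)
    have hp : δ * maxNorm v y x ^ d ≤ v (g y) := by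
      rw [hy] at hML₀ ⊢; exact (hfg y hML₀).trans (min_le_right _ _)
    exact (half_mul_pow_le_abv_add_mul hd hδ hM hML hp hm (le_maxNorm_right v y x)).trans
      (le_maxNorm_right v _ _)

lemma min_le_maxNorm_step_div_pow {f g : R → R} {δ L₀ L : ℝ} {d : ℕ} (hd : 2 ≤ d)
    (hδ : 0 < δ) (hL₀ : 1 < L₀) (hfg : ∀ z, L₀ ≤ v z → δ * v z ^ d ≤ min (v (f z)) (v (g z)))
    {l m : R} (hl : v l ≤ L) (hm : v m ≤ L) (x y : R) :
    min (max L₀ (2 * L / δ) ^ d)⁻¹ (δ / 2) ≤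
      maxNorm v (f x + l * y) (g y + m * x) / maxNorm v x y ^ d := by
  have hMpos : 0 < maxNorm v x y := zero_lt_one.trans_le (one_le_maxNorm v x y)
  rcases le_or_gt (maxNorm v x y) (max L₀ (2 * L / δ)) with hsmall | hlarge
  · calc min (max L₀ (2 * L / δ) ^ d)⁻¹ (δ / 2) ≤ (max L₀ (2 * L / δ) ^ d)⁻¹ := min_le_left _ _
      _ ≤ 1 / maxNorm v x y ^ d := by rw [one_div]; gcongr
      _ ≤ _ := by gcongr; exact one_le_maxNorm v _ _
  · rw [max_lt_iff] at hlarge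
    exact (min_le_right _ _).trans <| (le_div_iff₀ (pow_pos hMpos d)).2 <|
      half_mul_pow_le_maxNorm_step hd hδ hL₀ hfg hl hm hlarge.1.le hlarge.2.le

end Ring

end MaxNorm

theorem stmt9_general {K : Type*} [Field K] (v : AbsoluteValue K ℝ)
    (d : ℕ) (hd : 3 ≤ d)
    (P Q : Polynomial K)
    (δ L6 C : ℝ) (hδ : 0 < δ) (hL6 : 1 < L6) (hC : 1 ≤ C)
    (hlow : ∀ z : K, L6 ≤ v z →
      δ * v z ^ d ≤ min (v (P.eval z)) (v (Q.eval z)))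
    (hup : ∀ z : K, max (v (P.eval z)) (v (Q.eval z)) ≤ C * max 1 (v z) ^ d)
    (a b : K)
    (L : ℝ) (hL : 1 < L) :
    ∃ C16 C17 : ℝ, 0 < C16 ∧ C16 ≤ C17 ∧
      ∀ (l m : K) (A B : ℕ → K), v l ≤ L → v m ≤ L →
        A 0 = a → B 0 = b →
        (∀ n, A (n + 1) = P.eval (A n) + l * B n) →
        (∀ n, B (n + 1) = Q.eval (B n) + m * A n) →
        ∀ n : ℕ, 1 ≤ n →
          C16 ≤ max (max (v (A (n + 1))) (v (B (n + 1)))) 1 /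
              (max (max (v (A n)) (v (B n))) 1) ^ d ∧
          max (max (v (A (n + 1))) (v (B (n + 1)))) 1 /
              (max (max (v (A n)) (v (B n))) 1) ^ d ≤ C17 := by
  have hL₇ : 1 < max L6 (2 * L / δ) := hL6.trans_le (le_max_left _ _)
  refine ⟨min (max L6 (2 * L / δ) ^ d)⁻¹ (δ / 2), C + L,
    lt_min (inv_pos.2 (pow_pos (zero_lt_one.trans hL₇) d)) (half_pos hδ), ?_, ?_⟩
  · calc min (max L6 (2 * L / δ) ^ d)⁻¹ (δ / 2) ≤ (max L6 (2 * L / δ) ^ d)⁻¹ := min_le_left _ _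
      _ ≤ 1 := inv_le_one_of_one_le₀ (one_le_pow₀ hL₇.le)
      _ ≤ C + L := by linarith
  · intro l m A B hl hm _ _ hA hB n _
    rw [hA n, hB n]
    exact ⟨min_le_maxNorm_step_div_pow (by omega) hδ hL6 hlow hl hm (A n) (B n),
      maxNorm_step_div_pow_le (by omega) hC hup hl hm (A n) (B n)⟩

/-- Lemma 8.2, "again in a finite ball": for parameters `λ, μ` in a
bounded region `max(|λ|,|μ|) ≤ L`, the quantities `M_n = max(|A_n|,|B_n|,1)` satisfy
`C₁₆ ≤ M_{n+1}/M_n^d ≤ C₁₇` with constants independent of `λ, μ, n`. -/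
theorem stmt9 {K : Type*} [Field K] (v : AbsoluteValue K ℝ)
    (d : ℕ) (hd : 3 ≤ d)
    (P Q : Polynomial K) (hPdeg : P.natDegree = d) (hQdeg : Q.natDegree = d)
    (δ L6 C : ℝ) (hδ : 0 < δ) (hL6 : 1 < L6) (hC : 1 ≤ C)
    (hlow : ∀ z : K, L6 ≤ v z →
      δ * v z ^ d ≤ min (v (P.eval z)) (v (Q.eval z)))
    (hup : ∀ z : K, max (v (P.eval z)) (v (Q.eval z)) ≤ C * max 1 (v z) ^ d)
    (a b : K) (ha : a ≠ 0) (hb : b ≠ 0)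
    (L : ℝ) (hL : 1 < L) :
    ∃ C16 C17 : ℝ, 0 < C16 ∧ C16 ≤ C17 ∧
      ∀ (l m : K) (A B : ℕ → K), v l ≤ L → v m ≤ L →
        A 0 = a → B 0 = b →
        (∀ n, A (n + 1) = P.eval (A n) + l * B n) →
        (∀ n, B (n + 1) = Q.eval (B n) + m * A n) →
        ∀ n : ℕ, 1 ≤ n →
          C16 ≤ max (max (v (A (n + 1))) (v (B (n + 1)))) 1 /
              (max (max (v (A n)) (v (B n))) 1) ^ d ∧
          max (max (v (A (n + 1))) (v (B (n + 1)))) 1 /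
              (max (max (v (A n)) (v (B n))) 1) ^ d ≤ C17 :=
  stmt9_general v d hd P Q δ L6 C hδ hL6 hC hlow hup a b L hL
end

section
/- With the notation of the two-parameter family (d ≥ 3, P, Q of degree d, δ and L_6 as in the growth bounds, a, b nonzero, A_{n+1} = P(A_n) + λB_n, B_{n+1} = Q(B_n) + μA_n, M_n = max(|A_n|_v,|B_n|_v,1)): there exists L > 1 (depending on a, b, δ, L_6, d, and the values |P(a)|_v, |Q(b)|_v) such that whenever max(|λ|_v,|μ|_v) > L, one has δ/2 ≤ M_{n+1}/M_n^d ≤ C_{15} + δ/2 for all n ≥ 1, where C_{15} is the constant with max(|P(z)|,|Q(z)|) ≤ C_{15} max(1,|z|)^d. -/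
lemma abv_lower {K : Type*} [Field K] (v : AbsoluteValue K ℝ) (x y : K) :
    v x - v y ≤ v (x + y) := by
  have h := v.add_le (x + y) (-y)
  simp only [add_neg_cancel_right] at h
  rw [v.map_neg] at h
  linarith

lemma step10 {K : Type*} [Field K] (v : AbsoluteValue K ℝ)
    (d : ℕ) (hd : 3 ≤ d)
    (P Q : Polynomial K)
    (δ L6 C15 : ℝ) (hδ0 : 0 < δ) (hL6 : 1 < L6) (hC15 : 1 ≤ C15)
    (hlow : ∀ z : K, L6 ≤ v z →
      δ * v z ^ d ≤ min (v (P.eval z)) (v (Q.eval z)))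
    (hup : ∀ z : K, max (v (P.eval z)) (v (Q.eval z)) ≤ C15 * max 1 (v z) ^ d)
    (l m A B : K)
    (hML6 : L6 ≤ max (max (v A) (v B)) 1)
    (hMT : 2 * max (v l) (v m) ≤ δ * (max (max (v A) (v B)) 1) ^ (d - 1)) :
    δ / 2 * (max (max (v A) (v B)) 1) ^ d ≤
        max (max (v (P.eval A + l * B)) (v (Q.eval B + m * A))) 1 ∧
      max (max (v (P.eval A + l * B)) (v (Q.eval B + m * A))) 1 ≤
        (C15 + δ / 2) * (max (max (v A) (v B)) 1) ^ d := by
  set M := max (max (v A) (v B)) 1 with hMdef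
  have hM1 : (1:ℝ) ≤ M := le_max_right _ _
  have hM0 : (0:ℝ) < M := lt_of_lt_of_le one_pos hM1
  have hMd : M ^ d = M ^ (d - 1) * M := by
    rw [← pow_succ]; congr 1; omega
  have hT0 : 0 ≤ max (v l) (v m) := le_trans (v.nonneg l) (le_max_left _ _)
  have hTM : max (v l) (v m) * M ≤ δ / 2 * M ^ d := by
    rw [hMd]
    have h1 : max (v l) (v m) ≤ δ / 2 * M ^ (d - 1) := by linarith
    nlinarith [pow_pos hM0 (d - 1)]
  have hvA : v A ≤ M := le_trans (le_max_left _ _) (le_max_left _ _)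
  have hvB : v B ≤ M := le_trans (le_max_right _ _) (le_max_left _ _)
  have hmaxA : max 1 (v A) ≤ M := max_le hM1 hvA
  have hmaxB : max 1 (v B) ≤ M := max_le hM1 hvB
  have hMdpos : (0:ℝ) < M ^ d := pow_pos hM0 d
  -- upper bounds
  have hupA : v (P.eval A + l * B) ≤ (C15 + δ / 2) * M ^ d := by
    have h1 : v (P.eval A + l * B) ≤ v (P.eval A) + v l * v B := by
      have := v.add_le (P.eval A) (l * B)
      rw [v.map_mul] at this; linarith
    have h2 : v (P.eval A) ≤ C15 * max 1 (v A) ^ d :=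
      le_trans (le_max_left _ _) (hup A)
    have h3 : max 1 (v A) ^ d ≤ M ^ d :=
      pow_le_pow_left₀ (le_trans zero_le_one (le_max_left _ _)) hmaxA d
    have h4 : v l * v B ≤ max (v l) (v m) * M :=
      mul_le_mul (le_max_left _ _) hvB (v.nonneg B) hT0
    nlinarith
  have hupB : v (Q.eval B + m * A) ≤ (C15 + δ / 2) * M ^ d := by
    have h1 : v (Q.eval B + m * A) ≤ v (Q.eval B) + v m * v A := by
      have := v.add_le (Q.eval B) (m * A)
      rw [v.map_mul] at this; linarith
    have h2 : v (Q.eval B) ≤ C15 * max 1 (v B) ^ d :=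
      le_trans (le_max_right _ _) (hup B)
    have h3 : max 1 (v B) ^ d ≤ M ^ d :=
      pow_le_pow_left₀ (le_trans zero_le_one (le_max_left _ _)) hmaxB d
    have h4 : v m * v A ≤ max (v l) (v m) * M :=
      mul_le_mul (le_max_right _ _) hvA (v.nonneg A) hT0
    nlinarith
  have hMd1 : (1:ℝ) ≤ M ^ d := one_le_pow₀ hM1
  have hone : (1:ℝ) ≤ (C15 + δ / 2) * M ^ d := by nlinarith
  constructor
  · -- lower bound
    have hmax1 : (1:ℝ) ≤ max (v A) (v B) := by
      by_contra h
      push_neg at h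
      have : M = 1 := max_eq_right h.le
      linarith
    have hMax : M = max (v A) (v B) := max_eq_left hmax1
    rcases le_total (v B) (v A) with hAB | hAB
    · have hvAM : v A = M := by rw [hMax, max_eq_left hAB]
      have hA6 : L6 ≤ v A := by rw [hvAM]; exact hML6
      have hlo : δ * M ^ d ≤ v (P.eval A) := by
        have := le_trans (hlow A hA6) (min_le_left _ _)
        rwa [hvAM] at this
      have h1 : v (P.eval A) - v (l * B) ≤ v (P.eval A + l * B) :=
        abv_lower v _ _
      have h2 : v (l * B) ≤ max (v l) (v m) * M := by
        rw [v.map_mul]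
        exact mul_le_mul (le_max_left _ _) hvB (v.nonneg B) hT0
      have : δ / 2 * M ^ d ≤ v (P.eval A + l * B) := by linarith
      exact le_trans this (le_trans (le_max_left _ _) (le_max_left _ _))
    · have hvBM : v B = M := by rw [hMax, max_eq_right hAB]
      have hB6 : L6 ≤ v B := by rw [hvBM]; exact hML6
      have hlo : δ * M ^ d ≤ v (Q.eval B) := by
        have := le_trans (hlow B hB6) (min_le_right _ _)
        rwa [hvBM] at this
      have h1 : v (Q.eval B) - v (m * A) ≤ v (Q.eval B + m * A) :=
        abv_lower v _ _
      have h2 : v (m * A) ≤ max (v l) (v m) * M := by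
        rw [v.map_mul]
        exact mul_le_mul (le_max_right _ _) hvA (v.nonneg A) hT0
      have : δ / 2 * M ^ d ≤ v (Q.eval B + m * A) := by linarith
      exact le_trans this (le_trans (le_max_right _ _) (le_max_left _ _))
  · exact max_le (max_le hupA hupB) hone


/-- Lemma 8.3, "outside the finite ball": there is `L > 1` such that
whenever `max(|λ|,|μ|) > L`, one has `δ/2 ≤ M_{n+1}/M_n^d ≤ C₁₅ + δ/2` for all
`n ≥ 1`, where `M_n = max(|A_n|,|B_n|,1)`. -/
theorem stmt10 {K : Type*} [Field K] (v : AbsoluteValue K ℝ)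
    (d : ℕ) (hd : 3 ≤ d)
    (P Q : Polynomial K) (hPdeg : P.natDegree = d) (hQdeg : Q.natDegree = d)
    (δ L6 C15 : ℝ) (hδ0 : 0 < δ) (hδ1 : δ < 1) (hL6 : 1 < L6) (hC15 : 1 ≤ C15)
    (hlow : ∀ z : K, L6 ≤ v z →
      δ * v z ^ d ≤ min (v (P.eval z)) (v (Q.eval z)))
    (hup : ∀ z : K, max (v (P.eval z)) (v (Q.eval z)) ≤ C15 * max 1 (v z) ^ d)
    (a b : K) (ha : a ≠ 0) (hb : b ≠ 0) :
    ∃ L : ℝ, 1 < L ∧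
      ∀ (l m : K) (A B : ℕ → K), L < max (v l) (v m) →
        A 0 = a → B 0 = b →
        (∀ n, A (n + 1) = P.eval (A n) + l * B n) →
        (∀ n, B (n + 1) = Q.eval (B n) + m * A n) →
        ∀ n : ℕ, 1 ≤ n →
          δ / 2 ≤ max (max (v (A (n + 1))) (v (B (n + 1)))) 1 /
              (max (max (v (A n)) (v (B n))) 1) ^ d ∧
          max (max (v (A (n + 1))) (v (B (n + 1)))) 1 /
              (max (max (v (A n)) (v (B n))) 1) ^ d ≤ C15 + δ / 2 := by
  have ha0 : 0 < v a := v.pos ha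
  have hb0 : 0 < v b := v.pos hb
  set c : ℝ := min (v a) (v b) / 2 with hcdef
  have hc0 : 0 < c := by
    have : 0 < min (v a) (v b) := lt_min ha0 hb0
    positivity
  have hcpow : 0 < c ^ (d - 1) := pow_pos hc0 _
  set L : ℝ := 2 + 2 * v (P.eval a) / v b + 2 * v (Q.eval b) / v a
      + L6 / c + 2 / (δ * c ^ (d - 1)) with hLdef
  have hPa0 : 0 ≤ 2 * v (P.eval a) / v b := by positivity
  have hQb0 : 0 ≤ 2 * v (Q.eval b) / v a := by positivity
  have hL6c : 0 ≤ L6 / c := by positivity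
  have hdc : 0 ≤ 2 / (δ * c ^ (d - 1)) := by positivity
  refine ⟨L, by rw [hLdef]; linarith, ?_⟩
  intro l m A B hTL hA0 hB0 hA hB
  set T : ℝ := max (v l) (v m) with hTdef
  have hT2 : 2 ≤ T := by rw [hLdef] at hTL; linarith
  have hT1 : 1 ≤ T := by linarith
  have hT0 : 0 ≤ T := by linarith
  have hTa : 2 * v (P.eval a) / v b ≤ T := by rw [hLdef] at hTL; linarith
  have hTb : 2 * v (Q.eval b) / v a ≤ T := by rw [hLdef] at hTL; linarith
  have hTc : L6 / c ≤ T := by rw [hLdef] at hTL; linarith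
  have hTd : 2 / (δ * c ^ (d - 1)) ≤ T := by rw [hLdef] at hTL; linarith
  -- the invariant
  have key : ∀ n : ℕ, 1 ≤ n →
      L6 ≤ max (max (v (A n)) (v (B n))) 1 ∧
      2 * T ≤ δ * (max (max (v (A n)) (v (B n))) 1) ^ (d - 1) := by
    intro n hn
    induction n, hn using Nat.le_induction with
    | base =>
      have hA1 : A 1 = P.eval a + l * b := by rw [hA 0, hA0, hB0]
      have hB1 : B 1 = Q.eval b + m * a := by rw [hB 0, hB0, hA0]
      set M := max (max (v (A 1)) (v (B 1))) 1 with hMdef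
      have hM1 : (1:ℝ) ≤ M := le_max_right _ _
      have hcT : c * T ≤ M := by
        rcases le_total (v m) (v l) with h | h
        · have hTl : T = v l := max_eq_left h
          have h1 : v (l * b) - v (P.eval a) ≤ v (A 1) := by
            rw [hA1, add_comm]; exact abv_lower v _ _
          rw [v.map_mul] at h1
          have h2 : 2 * v (P.eval a) ≤ T * v b := by
            rw [div_le_iff₀ hb0] at hTa; linarith
          have h3 : c ≤ v b / 2 := by
            rw [hcdef]
            have := min_le_right (v a) (v b)
            linarith
          have h4 : c * T ≤ v (A 1) := by rw [hTl] at h2 ⊢; nlinarith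
          exact le_trans h4 (le_trans (le_max_left _ _) (le_max_left _ _))
        · have hTm : T = v m := max_eq_right h
          have h1 : v (m * a) - v (Q.eval b) ≤ v (B 1) := by
            rw [hB1, add_comm]; exact abv_lower v _ _
          rw [v.map_mul] at h1
          have h2 : 2 * v (Q.eval b) ≤ T * v a := by
            rw [div_le_iff₀ ha0] at hTb; linarith
          have h3 : c ≤ v a / 2 := by
            rw [hcdef]
            have := min_le_left (v a) (v b)
            linarith
          have h4 : c * T ≤ v (B 1) := by rw [hTm] at h2 ⊢; nlinarith
          exact le_trans h4 (le_trans (le_max_right _ _) (le_max_left _ _))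
      constructor
      · have : L6 ≤ c * T := by
          rw [div_le_iff₀ hc0] at hTc; linarith [mul_comm c T]
        linarith
      · have hpow : (c * T) ^ (d - 1) ≤ M ^ (d - 1) :=
          pow_le_pow_left₀ (by positivity) hcT _
        have hTdd : 2 ≤ δ * c ^ (d - 1) * T := by
          rw [div_le_iff₀ (by positivity)] at hTd; linarith [mul_comm (δ * c ^ (d - 1)) T]
        have hTpow : T ≤ T ^ (d - 2) := le_self_pow₀ hT1 (by omega)
        have hd1 : d - 1 = (d - 2) + 1 := by omega
        have hsplit : T ^ (d - 1) = T ^ (d - 2) * T := by rw [hd1, pow_succ]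
        have h5 : 2 * T ≤ δ * (c * T) ^ (d - 1) := by
          rw [mul_pow, hsplit]
          have h6 : δ * c ^ (d - 1) * T ≤ δ * c ^ (d - 1) * T ^ (d - 2) :=
            mul_le_mul_of_nonneg_left hTpow (by positivity)
          calc 2 * T ≤ δ * c ^ (d - 1) * T * T :=
                mul_le_mul_of_nonneg_right hTdd hT0
            _ ≤ δ * c ^ (d - 1) * T ^ (d - 2) * T :=
                mul_le_mul_of_nonneg_right h6 hT0
            _ = δ * (c ^ (d - 1) * (T ^ (d - 2) * T)) := by ring
        calc 2 * T ≤ δ * (c * T) ^ (d - 1) := h5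
          _ ≤ δ * M ^ (d - 1) := mul_le_mul_of_nonneg_left hpow (le_of_lt hδ0)
    | succ n hn ih =>
      obtain ⟨ih1, ih2⟩ := ih
      have hs := step10 v d hd P Q δ L6 C15 hδ0 hL6 hC15 hlow hup l m (A n) (B n) ih1 ih2
      rw [← hA n, ← hB n] at hs
      set M := max (max (v (A n)) (v (B n))) 1 with hMdef
      set M' := max (max (v (A (n + 1))) (v (B (n + 1)))) 1 with hM'def
      have hM1 : (1:ℝ) ≤ M := le_max_right _ _
      have hM0 : (0:ℝ) < M := lt_of_lt_of_le one_pos hM1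
      have hMd : M ^ d = M ^ (d - 1) * M := by rw [← pow_succ]; congr 1; omega
      have hlow' : δ / 2 * M ^ d ≤ M' := hs.1
      have hTMn : T * M ≤ δ / 2 * M ^ d := by
        have h1 : T ≤ δ / 2 * M ^ (d - 1) := by linarith
        calc T * M ≤ δ / 2 * M ^ (d - 1) * M :=
              mul_le_mul_of_nonneg_right h1 (le_of_lt hM0)
          _ = δ / 2 * M ^ d := by rw [hMd]; ring
      have hMM' : M ≤ M' := by
        have h2 : M ≤ T * M := le_mul_of_one_le_left (le_of_lt hM0) hT1
        linarith
      constructor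
      · linarith
      · have h3 : M ^ (d - 1) ≤ M' ^ (d - 1) := pow_le_pow_left₀ (le_of_lt hM0) hMM' _
        have h4 : δ * M ^ (d - 1) ≤ δ * M' ^ (d - 1) :=
          mul_le_mul_of_nonneg_left h3 (le_of_lt hδ0)
        linarith
  intro n hn
  obtain ⟨h1, h2⟩ := key n hn
  have hs := step10 v d hd P Q δ L6 C15 hδ0 hL6 hC15 hlow hup l m (A n) (B n) h1 h2
  rw [← hA n, ← hB n] at hs
  have hM0 : (0:ℝ) < max (max (v (A n)) (v (B n))) 1 :=
    lt_of_lt_of_le one_pos (le_max_right _ _)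
  have hMdpos : (0:ℝ) < (max (max (v (A n)) (v (B n))) 1) ^ d := pow_pos hM0 d
  constructor
  · rw [le_div_iff₀ hMdpos]; exact hs.1
  · rw [div_le_iff₀ hMdpos]; exact hs.2
end
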